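/- arXiv:1204.4279 — 4 statements merged into one kernel-verified Lean document; each statement's English description precedes it below -/
import Mathlib

section
/- For every integer d ≥ 3, the abelianization Γ_d/Γ_d' of the Fabrykowski–Gupta group Γ_d is isomorphic to ℤ_d × ℤ_d (the direct product of two cyclic groups of order d). -/
/-!
Every element of `Γ_d` acts on the first two levels of the tree by rotations: by some `c` at the
root and by some `f x` below each vertex `x`. The pair `(c, ∑ x, f x)` is multiplicative and sends
`a ↦ (1, 0)`, `r ↦ (0, 1)`. Since `a ^ d = r ^ d = 1`, `(i, j) ↦ a ^ i r ^ j` is a homomorphism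
`ℤ_d × ℤ_d → Γ_d / Γ_d'`, and it is a left inverse of the induced surjection
`Γ_d / Γ_d' → ℤ_d × ℤ_d` because the two agree on the generators.
-/

namespace FG

variable (d : ℕ) [NeZero d]

/-- The rooted-tree automorphism `a` of the `d`-regular rooted tree (vertex set: the free
monoid `{0,…,d-1}^*`), acting by `(x w)^a = ((x+1) mod d) w`. -/
def aFun : List (Fin d) → List (Fin d)
  | [] => []
  | x :: w => (x + 1) :: w

def aInv : List (Fin d) → List (Fin d)
  | [] => []
  | x :: w => (x - 1) :: w

lemma aInv_aFun : ∀ w, aInv d (aFun d w) = w := by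
  intro w; cases w <;> simp [aFun, aInv]

lemma aFun_aInv : ∀ w, aFun d (aInv d w) = w := by
  intro w; cases w <;> simp [aFun, aInv]

def aPerm : Equiv.Perm (List (Fin d)) :=
  ⟨aFun d, aInv d, aInv_aFun d, aFun_aInv d⟩

/-- The rooted-tree automorphism `r`:
`(0 w)^r = 0 w^a`, `(x w)^r = x w` for `1 ≤ x ≤ d-2`, `((d-1) w)^r = (d-1) w^r`. -/
def rFun : List (Fin d) → List (Fin d)
  | [] => []
  | x :: w => if x = 0 then x :: aFun d w else if x = -1 then x :: rFun w else x :: w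

def rInv : List (Fin d) → List (Fin d)
  | [] => []
  | x :: w => if x = 0 then x :: aInv d w else if x = -1 then x :: rInv w else x :: w

lemma rInv_rFun : ∀ w, rInv d (rFun d w) = w := by
  intro w
  induction w with
  | nil => simp [rFun, rInv]
  | cons x w ih =>
    by_cases h0 : x = 0
    · simp [rFun, rInv, h0, aInv_aFun]
    · by_cases h1 : x = -1
      · subst h1
        have hd : ¬ d = 1 := by simpa using h0
        simp [rFun, rInv, hd, ih]
      · simp [rFun, rInv, h0, h1]

lemma rFun_rInv : ∀ w, rFun d (rInv d w) = w := by
  intro w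
  induction w with
  | nil => simp [rFun, rInv]
  | cons x w ih =>
    by_cases h0 : x = 0
    · simp [rFun, rInv, h0, aFun_aInv]
    · by_cases h1 : x = -1
      · subst h1
        have hd : ¬ d = 1 := by simpa using h0
        simp [rFun, rInv, hd, ih]
      · simp [rFun, rInv, h0, h1]

def rPerm : Equiv.Perm (List (Fin d)) :=
  ⟨rFun d, rInv d, rInv_rFun d, rFun_rInv d⟩

/-- The Fabrykowski–Gupta group `Γ_d`, as the subgroup of the permutation group of the
free monoid `{0,…,d-1}^*` generated by the tree automorphisms `a` and `r`. -/
def Gamma : Subgroup (Equiv.Perm (List (Fin d))) :=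
  Subgroup.closure {aPerm d, rPerm d}

/-- The generator `a` as an element of `Γ_d`. -/
def aG : ↥(Gamma d) :=
  ⟨aPerm d, Subgroup.subset_closure (Set.mem_insert _ _)⟩

/-- The generator `r` as an element of `Γ_d`. -/
def rG : ↥(Gamma d) :=
  ⟨rPerm d, Subgroup.subset_closure (Set.mem_insert_iff.mpr (Or.inr rfl))⟩

/-- The `n`-th level stabilizer `Stab_{Γ_d}(n)`: all elements of `Γ_d` fixing every word
of length `n`. -/
def Stab (n : ℕ) : Subgroup ↥(Gamma d) where
  carrier := { g | ∀ w : List (Fin d), w.length = n → (g : Equiv.Perm (List (Fin d))) w = w }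
  one_mem' := by intro w _; rfl
  mul_mem' := by
    intro g h hg hh w hw
    have : ((g * h : ↥(Gamma d)) : Equiv.Perm (List (Fin d))) w
        = (g : Equiv.Perm (List (Fin d))) ((h : Equiv.Perm (List (Fin d))) w) := rfl
    rw [this, hh w hw, hg w hw]
  inv_mem' := by
    intro g hg w hw
    have h1 := hg w hw
    calc ((g⁻¹ : ↥(Gamma d)) : Equiv.Perm (List (Fin d))) w
        = (g : Equiv.Perm (List (Fin d)))⁻¹ ((g : Equiv.Perm (List (Fin d))) w) := by
          rw [h1]; rfl
      _ = w := Equiv.symm_apply_apply _ _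

/-- The conjugate `g_i = r^{a^i} = a^{-i} r a^i` in `Γ_d`. -/
def gG (i : ℕ) : ↥(Gamma d) := (aG d ^ i)⁻¹ * rG d * aG d ^ i

end FG

namespace ZMod

variable {n : ℕ}

def liftOfPow {A : Type*} [Group A] {x : A} (hx : x ^ n = 1) : ZMod n →+ Additive A :=
  lift n ⟨zmultiplesHom _ (Additive.ofMul x), by
    rw [zmultiplesHom_apply, natCast_zsmul, ← ofMul_pow, hx, ofMul_one]⟩

@[simp]
lemma liftOfPow_one {A : Type*} [Group A] {x : A} (hx : x ^ n = 1) :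
    liftOfPow hx 1 = Additive.ofMul x := by
  rw [liftOfPow, ← Int.cast_one, lift_coe, zmultiplesHom_apply, one_zsmul]

def prodLiftOfPow {A : Type*} [CommGroup A] {x y : A} (hx : x ^ n = 1) (hy : y ^ n = 1) :
    Multiplicative (ZMod n × ZMod n) →* A :=
  AddMonoidHom.toMultiplicativeLeft (AddMonoidHom.coprod (liftOfPow hx) (liftOfPow hy))

@[simp]
lemma prodLiftOfPow_ofAdd_one_zero {A : Type*} [CommGroup A] {x y : A} (hx : x ^ n = 1)
    (hy : y ^ n = 1) : prodLiftOfPow hx hy (Multiplicative.ofAdd (1, 0)) = x := by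
  simp [prodLiftOfPow]

@[simp]
lemma prodLiftOfPow_ofAdd_zero_one {A : Type*} [CommGroup A] {x y : A} (hx : x ^ n = 1)
    (hy : y ^ n = 1) : prodLiftOfPow hx hy (Multiplicative.ofAdd (0, 1)) = y := by
  simp [prodLiftOfPow]

end ZMod

theorem Abelianization.nonempty_mulEquiv_zmod_prod {G : Type*} [Group G] {n : ℕ} {a r : G}
    (hgen : Subgroup.closure {a, r} = ⊤) (ha : a ^ n = 1) (hr : r ^ n = 1)
    (φ : G →* Multiplicative (ZMod n × ZMod n)) (hφa : φ a = Multiplicative.ofAdd (1, 0))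
    (hφr : φ r = Multiplicative.ofAdd (0, 1)) :
    Nonempty (Abelianization G ≃* Multiplicative (ZMod n × ZMod n)) := by
  let ψ := ZMod.prodLiftOfPow (x := of a) (y := of r) (by rw [← map_pow, ha, map_one])
    (by rw [← map_pow, hr, map_one])
  have hleft : ψ.comp (lift φ) = MonoidHom.id _ := by
    refine hom_ext _ _ (MonoidHom.eq_of_eqOn_dense hgen ?_)
    rintro g (rfl | rfl) <;> simp [ψ, hφa, hφr]
  have hsurj : Function.Surjective (lift φ) := by
    intro z
    obtain ⟨i, hi⟩ := ZMod.intCast_surjective (Multiplicative.toAdd z).1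
    obtain ⟨j, hj⟩ := ZMod.intCast_surjective (Multiplicative.toAdd z).2
    refine ⟨of (a ^ i * r ^ j), ?_⟩
    simp [hφa, hφr, ← ofAdd_zsmul, ← ofAdd_add, hi, hj]
  exact ⟨MulEquiv.ofBijective (lift φ)
    ⟨Function.LeftInverse.injective (g := ψ) (DFunLike.congr_fun hleft), hsurj⟩⟩

namespace FG

open Fin.NatCast

variable {d : ℕ} [NeZero d]

lemma aPerm_pow_apply_cons (n : ℕ) (x : Fin d) (w : List (Fin d)) :
    (aPerm d ^ n) (x :: w) = (x + (n : Fin d)) :: w := by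
  induction n with
  | zero => simp
  | succ n ih => rw [pow_succ', Equiv.Perm.mul_apply, ih, Nat.cast_succ, ← add_assoc]; rfl

lemma aPerm_pow_card : aPerm d ^ d = 1 := by
  ext1 w
  cases w with
  | nil => exact Function.iterate_fixed rfl d
  | cons x w => rw [aPerm_pow_apply_cons, Fin.natCast_self, add_zero, Equiv.Perm.one_apply]

lemma rPerm_zero_cons (w : List (Fin d)) : rPerm d (0 :: w) = 0 :: aPerm d w := by
  simp [rPerm, rFun, aPerm]

lemma rPerm_neg_one_cons (h : (-1 : Fin d) ≠ 0) (w : List (Fin d)) :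
    rPerm d (-1 :: w) = -1 :: rPerm d w := by
  simp [rPerm, rFun, h]

lemma rPerm_cons_of_ne {x : Fin d} (h0 : x ≠ 0) (h1 : x ≠ -1) (w : List (Fin d)) :
    rPerm d (x :: w) = x :: w := by
  simp [rPerm, rFun, h0, h1]

lemma rPerm_pow_card : rPerm d ^ d = 1 := by
  ext1 w
  rw [Equiv.Perm.coe_pow, Equiv.Perm.one_apply]
  induction w with
  | nil => exact Function.iterate_fixed rfl d
  | cons x w ih =>
    by_cases h0 : x = 0
    · subst h0
      rw [← Function.Semiconj.iterate_right (fun w => (rPerm_zero_cons w).symm),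
        ← Equiv.Perm.coe_pow, aPerm_pow_card, Equiv.Perm.one_apply]
    · by_cases h1 : x = -1
      · subst h1
        rw [← Function.Semiconj.iterate_right (fun w => (rPerm_neg_one_cons h0 w).symm), ih]
      · exact Function.iterate_fixed (rPerm_cons_of_ne h0 h1 w) d

lemma closure_aG_rG : Subgroup.closure {aG d, rG d} = ⊤ := by
  have h : Subgroup.closure (((↑) : Gamma d → _) ⁻¹' {aPerm d, rPerm d}) = ⊤ :=
    Subgroup.closure_closure_coe_preimage
  convert h using 2
  ext g
  simp [aG, rG, Subtype.ext_iff]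

structure IsRotationPortrait (g : Equiv.Perm (List (Fin d))) (c : Fin d) (f : Fin d → Fin d) :
    Prop where
  nil : g [] = []
  singleton (x : Fin d) : g [x] = [x + c]
  cons_cons (x y : Fin d) (w : List (Fin d)) :
    ∃ w', g (x :: y :: w) = (x + c) :: (y + f x) :: w'

def rootRotation (g : Equiv.Perm (List (Fin d))) : Fin d := (g [0]).headD 0

def vertexRotation (g : Equiv.Perm (List (Fin d))) (x : Fin d) : Fin d := (g [x, 0]).tail.headD 0

namespace IsRotationPortrait

variable {g h : Equiv.Perm (List (Fin d))} {c c' : Fin d} {f f' : Fin d → Fin d}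

lemma one : IsRotationPortrait (1 : Equiv.Perm (List (Fin d))) 0 0 :=
  ⟨rfl, fun _ => by simp, fun _ _ w => ⟨w, by simp⟩⟩

lemma mul (hg : IsRotationPortrait g c f) (hh : IsRotationPortrait h c' f') :
    IsRotationPortrait (g * h) (c' + c) (fun x => f' x + f (x + c')) where
  nil := by rw [Equiv.Perm.mul_apply, hh.nil, hg.nil]
  singleton x := by rw [Equiv.Perm.mul_apply, hh.singleton, hg.singleton, add_assoc]
  cons_cons x y w := by
    obtain ⟨w₁, hw₁⟩ := hh.cons_cons x y w
    obtain ⟨w₂, hw₂⟩ := hg.cons_cons (x + c') (y + f' x) w₁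
    exact ⟨w₂, by rw [Equiv.Perm.mul_apply, hw₁, hw₂, add_assoc, add_assoc]⟩

lemma inv (hg : IsRotationPortrait g c f) :
    IsRotationPortrait g⁻¹ (-c) (fun x => -f (x - c)) where
  nil := by rw [Equiv.Perm.inv_eq_iff_eq, hg.nil]
  singleton x := by rw [Equiv.Perm.inv_eq_iff_eq, hg.singleton, neg_add_cancel_right]
  cons_cons x y w := by
    have hu : g (g⁻¹ (x :: y :: w)) = x :: y :: w := g.apply_symm_apply _
    -- `g` maps words of length `≤ 1` to such words, so `g⁻¹` maps longer words to longer words.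
    rcases hv : g⁻¹ (x :: y :: w) with _ | ⟨z₁, _ | ⟨z₂, w'⟩⟩
    · simp [hv, hg.nil] at hu
    · simp [hv, hg.singleton] at hu
    · obtain ⟨w₂, hw₂⟩ := hg.cons_cons z₁ z₂ w'
      rw [hv, hw₂, List.cons.injEq, List.cons.injEq] at hu
      obtain ⟨rfl, rfl, -⟩ := hu
      exact ⟨w', by simp⟩

lemma rootRotation_eq (h : IsRotationPortrait g c f) : rootRotation g = c := by
  simp [rootRotation, h.singleton]

lemma vertexRotation_eq (h : IsRotationPortrait g c f) : vertexRotation g = f := by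
  ext1 x
  obtain ⟨w, hw⟩ := h.cons_cons x 0 []
  simp [vertexRotation, hw]

end IsRotationPortrait

lemma isRotationPortrait_aPerm : IsRotationPortrait (aPerm d) 1 0 :=
  ⟨rfl, fun _ => rfl, fun _ _ w => ⟨w, by simp [aPerm, aFun]⟩⟩

lemma isRotationPortrait_rPerm :
    IsRotationPortrait (rPerm d) 0 (fun x => if x = 0 then 1 else 0) := by
  have hcons (x : Fin d) (w : List (Fin d)) : ∃ w', rPerm d (x :: w) = x :: w' := by
    by_cases h0 : x = 0
    · exact ⟨_, h0 ▸ rPerm_zero_cons w⟩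
    by_cases h1 : x = -1
    · exact ⟨_, h1 ▸ rPerm_neg_one_cons (h1 ▸ h0) w⟩
    · exact ⟨_, rPerm_cons_of_ne h0 h1 w⟩
  refine ⟨rfl, fun x => ?_, fun x y w => ?_⟩
  · by_cases h0 : x = 0 <;> by_cases h1 : x = -1 <;> simp [rPerm, rFun, aFun, *]
  by_cases h0 : x = 0
  · subst h0
    exact ⟨w, by rw [rPerm_zero_cons, if_pos rfl]; rfl⟩
  obtain ⟨w', hw'⟩ := hcons y w
  by_cases h1 : x = -1
  · subst h1
    exact ⟨w', by rw [rPerm_neg_one_cons h0, hw', if_neg h0, add_zero, add_zero]⟩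
  · exact ⟨w, by rw [rPerm_cons_of_ne h0 h1, if_neg h0, add_zero, add_zero]⟩

lemma aG_pow_card : aG d ^ d = 1 := Subtype.ext aPerm_pow_card

lemma rG_pow_card : rG d ^ d = 1 := Subtype.ext rPerm_pow_card

variable (d) in
def rotationPortraitSubgroup : Subgroup (Equiv.Perm (List (Fin d))) where
  carrier := {g | ∃ c f, IsRotationPortrait g c f}
  mul_mem' := fun ⟨_, _, hg⟩ ⟨_, _, hh⟩ => ⟨_, _, hg.mul hh⟩
  one_mem' := ⟨_, _, .one⟩
  inv_mem' := fun ⟨_, _, hg⟩ => ⟨_, _, hg.inv⟩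

lemma gamma_le_rotationPortraitSubgroup : Gamma d ≤ rotationPortraitSubgroup d := by
  refine Subgroup.closure_le _ |>.2 ?_
  rintro g (rfl | rfl)
  exacts [⟨_, _, isRotationPortrait_aPerm⟩, ⟨_, _, isRotationPortrait_rPerm⟩]

variable (d) in
def rotationHom : rotationPortraitSubgroup d →* Multiplicative (ZMod d × ZMod d) where
  toFun g := Multiplicative.ofAdd
    (ZMod.finEquiv d (rootRotation g), ZMod.finEquiv d (∑ x, vertexRotation g x))
  map_one' := by
    simp [IsRotationPortrait.one.rootRotation_eq, IsRotationPortrait.one.vertexRotation_eq]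
  map_mul' := by
    rintro ⟨g, c, f, hg⟩ ⟨h, c', f', hh⟩
    simp only [Subgroup.coe_mul, (hg.mul hh).rootRotation_eq, (hg.mul hh).vertexRotation_eq,
      hg.rootRotation_eq, hg.vertexRotation_eq, hh.rootRotation_eq, hh.vertexRotation_eq]
    rw [← ofAdd_add, Finset.sum_add_distrib,
      Fintype.sum_equiv (Equiv.addRight c') (fun x => f (x + c')) f fun _ => rfl]
    simp [add_comm]

lemma rotationHom_apply (g : rotationPortraitSubgroup d) {c : Fin d} {f : Fin d → Fin d}
    (h : IsRotationPortrait (g : Equiv.Perm (List (Fin d))) c f) :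
    rotationHom d g = Multiplicative.ofAdd (ZMod.finEquiv d c, ZMod.finEquiv d (∑ x, f x)) := by
  simp [rotationHom, h.rootRotation_eq, h.vertexRotation_eq]

variable (d) in
def gammaRotationHom : Gamma d →* Multiplicative (ZMod d × ZMod d) :=
  (rotationHom d).comp (Subgroup.inclusion gamma_le_rotationPortraitSubgroup)

lemma gammaRotationHom_aG : gammaRotationHom d (aG d) = Multiplicative.ofAdd (1, 0) := by
  rw [gammaRotationHom, MonoidHom.comp_apply, rotationHom_apply _ isRotationPortrait_aPerm]
  simp

lemma gammaRotationHom_rG : gammaRotationHom d (rG d) = Multiplicative.ofAdd (0, 1) := by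
  rw [gammaRotationHom, MonoidHom.comp_apply, rotationHom_apply _ isRotationPortrait_rPerm]
  simp

end FG

theorem stmt_0_general (d : ℕ) [NeZero d] :
    Nonempty (Abelianization ↥(FG.Gamma d) ≃* Multiplicative (ZMod d × ZMod d)) :=
  Abelianization.nonempty_mulEquiv_zmod_prod FG.closure_aG_rG FG.aG_pow_card FG.rG_pow_card
    (FG.gammaRotationHom d) FG.gammaRotationHom_aG FG.gammaRotationHom_rG

/-- For every `d ≥ 3`, the abelianization `Γ_d/Γ_d'` of the Fabrykowski–Gupta group is
isomorphic to `ℤ_d × ℤ_d`. -/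
theorem stmt_0 (d : ℕ) [NeZero d] (hd : 3 ≤ d) :
    Nonempty (Abelianization ↥(FG.Gamma d) ≃* Multiplicative (ZMod d × ZMod d)) :=
  stmt_0_general d
end

section
/- Let d ≥ 3 and for 0 ≤ i ≤ d−1 set g_i = r^{a^i} = a^{−i} r a^i in the Fabrykowski–Gupta group Γ_d, indices read modulo d. Then for all integers ℓ, k: (i) if 0 ≤ i, j ≤ d−1 satisfy 2 ≤ |i−j| ≤ d−2, the commutator [g_i^ℓ, g_j^k] is trivial; (ii) for every i, the commutator [g_i^ℓ, g_{i+1}^k] lies in the second level stabilizer Stab_{Γ_d}(2). Consequently the quotient Stab_{Γ_d}(1)/Stab_{Γ_d}(2) is abelian and is generated by the images of g_0, …, g_{d−1}. -/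
open scoped commutatorElement

/-!
Conjugating `r` by `a^i` relabels the first-level vertices, so `g_i` fixes the first level and
acts as `a` below the vertex `-i`, as `r` below `-i-1` and trivially elsewhere. If `i - j` is not
`0` or `±1` modulo `d` these vertices are distinct, so `g_i` and `g_j` commute.

Every element of `Γ_d` acts on the first two levels as `x y ↦ (x + t) (y + s x)`. On `Stab(1)`
the map `g ↦ s` is therefore a homomorphism to the abelian group `(ℤ/d)^d`, with kernel
`Stab(2)`; this gives the commutator claims. It sends `g_i` to the basis vector at `-i`, so the
`g_i` generate `Stab(1)` modulo `Stab(2)`.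
-/

open scoped Fin.NatCast Fin.CommRing

namespace Equiv.Perm

variable {α : Type*}

def ofSectionsFun (F : α → Perm (List α)) : List α → List α
  | [] => []
  | x :: w => x :: F x w

def ofSections : (α → Perm (List α)) →* Perm (List α) where
  toFun F :=
    { toFun := ofSectionsFun F
      invFun := ofSectionsFun F⁻¹
      left_inv := by rintro (_ | ⟨x, w⟩) <;> simp [ofSectionsFun]
      right_inv := by rintro (_ | ⟨x, w⟩) <;> simp [ofSectionsFun] }
  map_one' := Equiv.ext <| by rintro (_ | ⟨x, w⟩) <;> rfl
  map_mul' F G := Equiv.ext <| by rintro (_ | ⟨x, w⟩) <;> rfl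

@[simp]
lemma ofSections_nil (F : α → Perm (List α)) : ofSections F [] = [] := rfl

@[simp]
lemma ofSections_cons (F : α → Perm (List α)) (x : α) (w : List α) :
    ofSections F (x :: w) = x :: F x w := rfl

lemma commute_ofSections {F G : α → Perm (List α)} (h : ∀ x, F x = 1 ∨ G x = 1) :
    Commute (ofSections F) (ofSections G) := by
  refine Commute.map (funext fun x => ?_) _
  rcases h x with h | h <;> simp [h]

end Equiv.Perm

namespace Subgroup

lemma closure_range_mulSingle {ι G : Type*} [Finite ι] [DecidableEq ι] [Group G] {g : G}
    (hg : ∀ x, x ∈ zpowers g) : closure (Set.range fun i : ι => Pi.mulSingle i g) = ⊤ := by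
  refine eq_top_iff.2 fun f _ => pi_mem_of_mulSingle_mem f fun i => ?_
  obtain ⟨k, hk⟩ := mem_zpowers_iff.1 (hg (f i))
  rw [← hk, Pi.mulSingle_zpow]
  exact zpow_mem (subset_closure (Set.mem_range_self i)) k

end Subgroup

lemma Fin.natCast_ne_natCast_add_one {d : ℕ} [NeZero d] {i j : ℕ} (hi : i < d) (hj : j < d)
    (h₁ : i ≠ j + 1) (h₂ : i + d ≠ j + 1) : (i : Fin d) ≠ j + 1 := by
  intro h
  have hval := congrArg Fin.val h
  rw [← Nat.cast_add_one, Fin.val_natCast, Fin.val_natCast, Nat.mod_eq_of_lt hi] at hval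
  rcases (show j + 1 ≤ d by omega).lt_or_eq with hlt | heq
  · exact h₁ (by rwa [Nat.mod_eq_of_lt hlt] at hval)
  · rw [heq, Nat.mod_self] at hval
    omega

lemma Fin.mem_zpowers_ofAdd_one {d : ℕ} [NeZero d] (c : Multiplicative (Fin d)) :
    c ∈ Subgroup.zpowers (Multiplicative.ofAdd 1) := by
  have hc : c = Multiplicative.ofAdd (1 : Fin d) ^ (Multiplicative.toAdd c).val := by
    rw [← ofAdd_nsmul, nsmul_one, Fin.cast_val_eq_self, ofAdd_toAdd]
  exact hc ▸ Subgroup.npow_mem_zpowers _ _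

namespace FG

open Equiv Perm Multiplicative

variable (d : ℕ) [NeZero d]

def rSection (x : Fin d) : Perm (List (Fin d)) :=
  if x = 0 then aPerm d else if x = -1 then rPerm d else 1

lemma rPerm_eq_ofSections : rPerm d = ofSections (rSection d) := by
  refine Equiv.ext ?_
  rintro (_ | ⟨x, w⟩)
  · rfl
  · show rFun d (x :: w) = x :: rSection d x w
    unfold rSection
    split_ifs <;> simp_all [rFun, aPerm, rPerm]

lemma rSection_of_ne {x : Fin d} (h₀ : x ≠ 0) (h₁ : x ≠ -1) : rSection d x = 1 := by
  simp [rSection, h₀, h₁]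

@[simp]
lemma rSection_nil (x : Fin d) : rSection d x [] = [] := by
  unfold rSection
  split_ifs <;> rfl

lemma rSection_singleton (x y : Fin d) : rSection d x [y] = [y + if x = 0 then 1 else 0] := by
  unfold rSection
  split_ifs
  · rfl
  · simp [rPerm_eq_ofSections]
  · simp

lemma aPerm_pow_nil (n : ℕ) : (aPerm d ^ n) [] = [] := by
  induction n with
  | zero => rfl
  | succ n ih => rw [pow_succ', mul_apply, ih]; rfl

lemma aPerm_pow_cons (n : ℕ) (x : Fin d) (w : List (Fin d)) :
    (aPerm d ^ n) (x :: w) = (x + n) :: w := by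
  induction n with
  | zero => simp
  | succ n ih =>
    rw [pow_succ', mul_apply, ih]
    show (x + n + 1) :: w = _
    push_cast
    ring_nf

lemma coe_gG (i : ℕ) :
    ((gG d i : Gamma d) : Perm (List (Fin d))) = ofSections fun x => rSection d (x + i) := by
  have hcoe : ((gG d i : Gamma d) : Perm (List (Fin d))) =
      (aPerm d ^ i)⁻¹ * rPerm d * aPerm d ^ i := rfl
  refine Equiv.ext ?_
  rintro (_ | ⟨x, w⟩) <;> rw [hcoe, mul_apply, mul_apply, inv_eq_iff_eq, rPerm_eq_ofSections]
  · simp [aPerm_pow_nil]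
  · simp [aPerm_pow_cons]

lemma gG_mem_stab_one (i : ℕ) : gG d i ∈ Stab d 1 := by
  intro w hw
  obtain ⟨x, rfl⟩ := List.length_eq_one_iff.1 hw
  simp [coe_gG]

lemma gG_commute {i j : ℕ} (h₀ : (i : Fin d) ≠ j) (h₁ : (i : Fin d) ≠ j + 1)
    (h₂ : (j : Fin d) ≠ i + 1) : Commute (gG d i) (gG d j) := by
  have hsections : ∀ x : Fin d, rSection d (x + i) = 1 ∨ rSection d (x + j) = 1 := by
    intro x
    by_cases hi₀ : x + i = 0
    · by_cases hj₀ : x + j = 0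
      · exact absurd (by linear_combination hi₀ - hj₀) h₀
      · by_cases hj₁ : x + j = -1
        · exact absurd (by linear_combination hi₀ - hj₁) h₁
        · exact Or.inr (rSection_of_ne d hj₀ hj₁)
    by_cases hi₁ : x + i = -1
    · by_cases hj₀ : x + j = 0
      · exact absurd (by linear_combination hj₀ - hi₁) h₂
      · by_cases hj₁ : x + j = -1
        · exact absurd (by linear_combination hi₁ - hj₁) h₀
        · exact Or.inr (rSection_of_ne d hj₀ hj₁)
    exact Or.inl (rSection_of_ne d hi₀ hi₁)
  apply Subtype.ext
  simpa only [Subgroup.coe_mul, coe_gG] using (commute_ofSections hsections).eq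

lemma gG_commute_of_two_le_natAbs {i j : ℕ} (hi : i < d) (hj : j < d)
    (h₂ : 2 ≤ ((i : ℤ) - j).natAbs) (hd : ((i : ℤ) - j).natAbs ≤ d - 2) :
    Commute (gG d i) (gG d j) := by
  refine gG_commute d (fun h => ?_)
    (Fin.natCast_ne_natCast_add_one hi hj (by omega) (by omega))
    (Fin.natCast_ne_natCast_add_one hj hi (by omega) (by omega))
  have hval := congrArg Fin.val h
  rw [Fin.val_cast_of_lt hi, Fin.val_cast_of_lt hj] at hval
  omega

def twoLevelTranslations : Subgroup (Perm (List (Fin d))) where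
  carrier := {g | ∃ (t : Fin d) (s : Fin d → Fin d),
    (∀ x, g [x] = [x + t]) ∧ ∀ x y, g [x, y] = [x + t, y + s x]}
  one_mem' := ⟨0, 0, fun x => by simp, fun x y => by simp⟩
  mul_mem' := by
    rintro g h ⟨t, s, hg₁, hg₂⟩ ⟨t', s', hh₁, hh₂⟩
    refine ⟨t' + t, fun x => s' x + s (x + t'), fun x => ?_, fun x y => ?_⟩
    · rw [mul_apply, hh₁, hg₁, add_assoc]
    · rw [mul_apply, hh₂, hg₂, add_assoc, add_assoc]
  inv_mem' := by
    rintro g ⟨t, s, hg₁, hg₂⟩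
    refine ⟨-t, fun x => -s (x - t), fun x => ?_, fun x y => ?_⟩
    · rw [inv_eq_iff_eq, hg₁, neg_add_cancel_right]
    · rw [inv_eq_iff_eq, hg₂]
      simp only [sub_eq_add_neg, neg_add_cancel_right]

lemma Gamma_le_twoLevelTranslations : Gamma d ≤ twoLevelTranslations d := by
  rw [Gamma, Subgroup.closure_le, Set.insert_subset_iff, Set.singleton_subset_iff]
  refine ⟨⟨1, 0, fun x => rfl, fun x y => by simp [aPerm, aFun]⟩,
    ⟨0, fun x => if x = 0 then 1 else 0, fun x => ?_, fun x y => ?_⟩⟩ <;>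
  simp [rPerm_eq_ofSections, rSection_singleton]

def secondLetterShift (g : Gamma d) (x : Fin d) : Fin d :=
  ((g : Perm (List (Fin d))) [x, 0]).getD 1 0

lemma stab_one_apply_pair {g : Gamma d} (hg : g ∈ Stab d 1) (x y : Fin d) :
    (g : Perm (List (Fin d))) [x, y] = [x, y + secondLetterShift d g x] := by
  obtain ⟨t, s, h₁, h₂⟩ := Gamma_le_twoLevelTranslations d g.2
  have ht : x + t = x := List.head_eq_of_cons_eq ((h₁ x).symm.trans (hg [x] rfl))
  simp [secondLetterShift, h₂, ht]

def levelTwoShift : Stab d 1 →* (Fin d → Multiplicative (Fin d)) where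
  toFun g x := ofAdd (secondLetterShift d g x)
  map_one' := rfl
  map_mul' g h := funext fun x => by
    have hgh : ((g * h : Stab d 1) : Perm (List (Fin d))) [x, 0] =
        [x, secondLetterShift d h x + secondLetterShift d g x] := by
      show (g : Perm (List (Fin d))) ((h : Perm (List (Fin d))) [x, 0]) = _
      rw [stab_one_apply_pair d h.2, stab_one_apply_pair d g.2, zero_add]
    show ofAdd ((((g * h : Stab d 1) : Perm (List (Fin d))) [x, 0]).getD 1 0) = _
    rw [hgh, add_comm]
    rfl

lemma mem_stab_two_iff (g : Stab d 1) : (g : Gamma d) ∈ Stab d 2 ↔ levelTwoShift d g = 1 := by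
  constructor
  · intro hg
    funext x
    simp [levelTwoShift, secondLetterShift, hg [x, 0] rfl]
  · intro hg w hw
    obtain ⟨x, y, rfl⟩ := List.length_eq_two.1 hw
    have hx : secondLetterShift d g x = 0 := ofAdd_eq_one.1 (congrFun hg x)
    rw [stab_one_apply_pair d g.2, hx, add_zero]

lemma stab_two_le_stab_one : Stab d 2 ≤ Stab d 1 := by
  intro g hg w hw
  obtain ⟨x, rfl⟩ := List.length_eq_one_iff.1 hw
  obtain ⟨t, s, h₁, h₂⟩ := Gamma_le_twoLevelTranslations d g.2
  have ht : x + t = x := List.head_eq_of_cons_eq ((h₂ x 0).symm.trans (hg [x, 0] rfl))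
  rw [h₁, ht]

lemma commutatorElement_mem_stab_two {g h : Gamma d} (hg : g ∈ Stab d 1) (hh : h ∈ Stab d 1) :
    ⁅g, h⁆ ∈ Stab d 2 :=
  (mem_stab_two_iff d ⁅(⟨g, hg⟩ : Stab d 1), ⟨h, hh⟩⁆).2 <| by
    rw [map_commutatorElement, commutatorElement_eq_one_iff_commute]
    exact Commute.all _ _

def gStab (i : Fin d) : Stab d 1 := ⟨gG d i, gG_mem_stab_one d i⟩

lemma levelTwoShift_gStab (i : Fin d) :
    levelTwoShift d (gStab d i) = Pi.mulSingle (-i) (ofAdd 1) := by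
  funext x
  simp [levelTwoShift, secondLetterShift, gStab, coe_gG, rSection_singleton, Pi.mulSingle_apply,
    add_eq_zero_iff_eq_neg, apply_ite ofAdd]

lemma stab_one_le_closure_sup_stab_two :
    Stab d 1 ≤ Subgroup.closure (Set.range fun i : Fin d => gG d i) ⊔ Stab d 2 := by
  have hmap : (Subgroup.closure (Set.range (gStab d))).map (Stab d 1).subtype =
      Subgroup.closure (Set.range fun i : Fin d => gG d i) := by
    rw [MonoidHom.map_closure, ← Set.range_comp]
    rfl
  intro g hg
  obtain ⟨h, hgen, hshift⟩ : ∃ h ∈ Subgroup.closure (Set.range (gStab d)),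
      levelTwoShift d h = levelTwoShift d ⟨g, hg⟩ := by
    have hcomp : levelTwoShift d ∘ gStab d = (fun i => Pi.mulSingle i (ofAdd 1)) ∘ Neg.neg :=
      funext (levelTwoShift_gStab d)
    rw [← Subgroup.mem_map, MonoidHom.map_closure, ← Set.range_comp, hcomp,
      neg_surjective.range_comp,
      Subgroup.closure_range_mulSingle Fin.mem_zpowers_ofAdd_one]
    trivial
  have hquot : ((⟨g, hg⟩ * h⁻¹ : Stab d 1) : Gamma d) ∈ Stab d 2 :=
    (mem_stab_two_iff d _).2 (by rw [map_mul, map_inv, hshift, mul_inv_cancel])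
  have hcl := hmap ▸ Subgroup.mem_map_of_mem (Stab d 1).subtype hgen
  simpa using mul_mem (Subgroup.mem_sup_right hquot) (Subgroup.mem_sup_left hcl)

end FG

theorem stmt_4_general (d : ℕ) [NeZero d] :
    (∀ i j : ℕ, i < d → j < d → 2 ≤ ((i : ℤ) - j).natAbs → ((i : ℤ) - j).natAbs ≤ d - 2 →
      ∀ ℓ k : ℤ, ⁅FG.gG d i ^ ℓ, FG.gG d j ^ k⁆ = 1) ∧
    (∀ i : ℕ, ∀ ℓ k : ℤ, ⁅FG.gG d i ^ ℓ, FG.gG d (i + 1) ^ k⁆ ∈ FG.Stab d 2) ∧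
    (∀ x ∈ FG.Stab d 1, ∀ y ∈ FG.Stab d 1, ⁅x, y⁆ ∈ FG.Stab d 2) ∧
    FG.Stab d 1 = Subgroup.closure (Set.range fun i : Fin d => FG.gG d (i : ℕ)) ⊔ FG.Stab d 2 := by
  refine ⟨fun i j hi hj h₂ hd ℓ k => ?_, fun i ℓ k => ?_,
    fun x hx y hy => FG.commutatorElement_mem_stab_two d hx hy, ?_⟩
  · exact commutatorElement_eq_one_iff_commute.2
      ((FG.gG_commute_of_two_le_natAbs d hi hj h₂ hd).zpow_zpow ℓ k)
  · exact FG.commutatorElement_mem_stab_two d (zpow_mem (FG.gG_mem_stab_one d i) ℓ)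
      (zpow_mem (FG.gG_mem_stab_one d (i + 1)) k)
  · refine le_antisymm (FG.stab_one_le_closure_sup_stab_two d)
      (sup_le ?_ (FG.stab_two_le_stab_one d))
    rw [Subgroup.closure_le]
    rintro _ ⟨i, rfl⟩
    exact FG.gG_mem_stab_one d i

/-- Commutator relations among the conjugates `g_i = r^{a^i}` in `Γ_d` (`d ≥ 3`):
far-apart conjugates commute, adjacent ones have commutator in `Stab(2)`; consequently
`Stab(1)/Stab(2)` is abelian and is generated by the images of `g_0, …, g_{d-1}`. -/
theorem stmt_4 (d : ℕ) [NeZero d] (hd : 3 ≤ d) :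
    (∀ i j : ℕ, i < d → j < d → 2 ≤ ((i : ℤ) - j).natAbs → ((i : ℤ) - j).natAbs ≤ d - 2 →
      ∀ ℓ k : ℤ, ⁅FG.gG d i ^ ℓ, FG.gG d j ^ k⁆ = 1) ∧
    (∀ i : ℕ, ∀ ℓ k : ℤ, ⁅FG.gG d i ^ ℓ, FG.gG d (i + 1) ^ k⁆ ∈ FG.Stab d 2) ∧
    (∀ x ∈ FG.Stab d 1, ∀ y ∈ FG.Stab d 1, ⁅x, y⁆ ∈ FG.Stab d 2) ∧
    FG.Stab d 1 = Subgroup.closure (Set.range fun i : Fin d => FG.gG d (i : ℕ)) ⊔ FG.Stab d 2 :=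
  stmt_4_general d
end

section
/- (Reidemeister–Schreier for L-presentations) Every finite-index subgroup of a finitely L-presented group is itself finitely L-presented. -/
/-- A group `G` is finitely `L`-presented if for some finite alphabet (modelled as `Fin n`),
finite sets `Q`, `R` of relators and a finite set `Φ` of endomorphisms of the free group
`F`, the group `G` is isomorphic to `F/K` where `K` is the normal closure of
`Q ∪ ⋃_{σ ∈ Φ*} R^σ`, with `Φ*` the monoid of endomorphisms generated by `Φ`. -/
def IsFinitelyLPresented (G : Type u) [Group G] : Prop :=
  ∃ (n : ℕ) (Q R : Finset (FreeGroup (Fin n)))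
    (Φ : Finset (Monoid.End (FreeGroup (Fin n)))),
    Nonempty ((FreeGroup (Fin n) ⧸ Subgroup.normalClosure
      ((Q : Set (FreeGroup (Fin n))) ∪
        ⋃ σ ∈ Submonoid.closure (Φ : Set (Monoid.End (FreeGroup (Fin n)))),
          ⇑σ '' (R : Set (FreeGroup (Fin n))))) ≃* G)

/-!
Write `G = F/K` with `F` free of finite rank and `K` the normal closure of `Q ∪ Φ*(R)`, and let
`U ≤ F` be the preimage of `H`, so that `H ≅ U/K`. Map a free group `F'` of finite rank onto `U`
by `ψ`; it suffices to describe `ψ⁻¹(K)` by finitely many relators and endomorphisms of `F'`.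

* Since `U` is free (Nielsen–Schreier), `ψ` has a homomorphic section, so `ker ψ` is the normal
  closure of finitely many elements of `F'`.
* Inside `U`, the subgroup `K` is normally generated by the conjugates `t s t⁻¹` of its normal
  generators `s` by a finite right transversal `T` of `U`. For `s ∈ Q` these are finitely many.
* For `s ∈ Φ*(R)` the conjugates `t σ(r) t⁻¹` lie in the orbit of `R` under the monoid
  generated by `Φ` and the conjugations by `T`, which still lies in `K`. These endomorphisms
  need not preserve `U`, but they all preserve a finite-index normal subgroup `V ≤ U` containing
  `R` (the join of a fully invariant finite-index subgroup with the normal closure of `Φ*(R)`).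
  So they lift to the free group on a finite generating set of `V`, which sits inside `F'` as a
  retract; there the orbit of the lifted relators maps onto the orbit downstairs.
-/

universe u

open Subgroup Set

section Orbit

variable {A B : Type*} [Monoid A] [Monoid B]

def lOrbit (R : Set A) (Φ : Set (Monoid.End A)) : Set A :=
  ⋃ σ ∈ Submonoid.closure Φ, σ '' R

def semiconjSubmonoid (f : A →* B) : Submonoid (Monoid.End A × Monoid.End B) where
  carrier := {p | ∀ x, f (p.1 x) = p.2 (f x)}
  mul_mem' {p q} hp hq x := (hp (q.1 x)).trans (congrArg p.2 (hq x))
  one_mem' _ := rfl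

theorem image_lOrbit (f : A →* B) {ι : Type*} (I : Set ι) (φ : ι → Monoid.End A)
    (ρ : ι → Monoid.End B) (h : ∀ i ∈ I, ∀ x, f (φ i x) = ρ i (f x)) (R : Set A) :
    f '' lOrbit R (φ '' I) = lOrbit (f '' R) (ρ '' I) := by
  set M := Submonoid.closure ((fun i => (φ i, ρ i)) '' I)
  have hM : M ≤ semiconjSubmonoid f := Submonoid.closure_le.mpr <| by
    rintro _ ⟨i, hi, rfl⟩
    exact h i hi
  have hfst : Submonoid.closure (φ '' I) = M.map (MonoidHom.fst _ _) := by
    rw [MonoidHom.map_mclosure, image_image]; rfl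
  have hsnd : Submonoid.closure (ρ '' I) = M.map (MonoidHom.snd _ _) := by
    rw [MonoidHom.map_mclosure, image_image]; rfl
  ext y
  simp only [lOrbit, hfst, hsnd, Submonoid.mem_map, mem_image, mem_iUnion]
  constructor
  · rintro ⟨_, ⟨_, ⟨p, hp, rfl⟩, r, hr, rfl⟩, rfl⟩
    exact ⟨p.2, ⟨p, hp, rfl⟩, f r, ⟨r, hr, rfl⟩, (hM hp r).symm⟩
  · rintro ⟨_, ⟨p, hp, rfl⟩, _, ⟨r, hr, rfl⟩, rfl⟩
    exact ⟨p.1 r, ⟨p.1, ⟨p, hp, rfl⟩, r, hr, rfl⟩, hM hp r⟩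

end Orbit

def lNormalClosure {G : Type*} [Group G] (Q R : Set G) (Φ : Set (Monoid.End G)) :
    Subgroup G :=
  normalClosure (Q ∪ lOrbit R Φ)

section EndStabilizer

variable {G : Type*} [Group G]

def Subgroup.endStabilizer (H : Subgroup G) : Submonoid (Monoid.End G) where
  carrier := {σ | ∀ x ∈ H, σ x ∈ H}
  mul_mem' hσ hτ x hx := hσ _ (hτ x hx)
  one_mem' _ hx := hx

def conjEnd (g : G) : Monoid.End G := (MulAut.conj g).toMonoidHom

theorem Subgroup.Normal.conjEnd_mem_endStabilizer {H : Subgroup G} (hH : H.Normal) (g : G) :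
    conjEnd g ∈ H.endStabilizer := fun x hx => hH.conj_mem x hx g

theorem Subgroup.normal_of_forall_conjEnd_mem {H : Subgroup G}
    (hH : ∀ g, conjEnd g ∈ H.endStabilizer) : H.Normal :=
  ⟨fun x hx g => hH g x hx⟩

theorem Subgroup.mem_endStabilizer_sup {H K : Subgroup G} {σ : Monoid.End G}
    (hH : σ ∈ H.endStabilizer) (hK : σ ∈ K.endStabilizer) :
    σ ∈ (H ⊔ K).endStabilizer := by
  have hle : H ⊔ K ≤ (H ⊔ K).comap (σ : G →* G) :=
    sup_le (fun x hx => mem_sup_left (hH x hx)) (fun x hx => mem_sup_right (hK x hx))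
  exact fun x hx => hle hx

theorem mem_endStabilizer_normalClosure {S : Set G} {σ : Monoid.End G} (hσ : σ '' S ⊆ S) :
    σ ∈ (normalClosure S).endStabilizer := fun _ hx =>
  normalClosure_mono hσ (map_normalClosure_le S (σ : G →* G) ⟨_, hx, rfl⟩)

theorem image_lOrbit_subset_of_mem_closure {R : Set G} {Φ : Set (Monoid.End G)}
    {σ : Monoid.End G} (hσ : σ ∈ Submonoid.closure Φ) :
    σ '' lOrbit R Φ ⊆ lOrbit R Φ := by
  rintro _ ⟨_, hx, rfl⟩
  simp only [lOrbit, mem_iUnion] at hx ⊢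
  obtain ⟨τ, hτ, r, hr, rfl⟩ := hx
  exact ⟨σ * τ, Submonoid.mul_mem _ hσ hτ, r, hr, rfl⟩

theorem closure_le_endStabilizer_normalClosure_lOrbit (R : Set G) (Φ : Set (Monoid.End G)) :
    Submonoid.closure Φ ≤ (normalClosure (lOrbit R Φ)).endStabilizer := fun _ hσ =>
  mem_endStabilizer_normalClosure (image_lOrbit_subset_of_mem_closure hσ)

theorem lOrbit_union_conjEnd_subset (R : Set G) (Φ : Set (Monoid.End G)) (T : Set G) :
    lOrbit R (Φ ∪ conjEnd '' T) ⊆ normalClosure (lOrbit R Φ) := by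
  have hle : Submonoid.closure (Φ ∪ conjEnd '' T) ≤
      (normalClosure (lOrbit R Φ)).endStabilizer :=
    Submonoid.closure_le.mpr <| union_subset
      (Submonoid.subset_closure.trans (closure_le_endStabilizer_normalClosure_lOrbit R Φ))
      (by rintro _ ⟨t, -, rfl⟩; exact normalClosure_normal.conjEnd_mem_endStabilizer t)
  simp only [lOrbit, iUnion_subset_iff]
  rintro σ hσ _ ⟨r, hr, rfl⟩
  refine hle hσ r (subset_normalClosure ?_)
  exact mem_iUnion₂.mpr ⟨1, Submonoid.one_mem _, r, hr, rfl⟩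

theorem conj_mem_lOrbit_union_conjEnd {R : Set G} {Φ : Set (Monoid.End G)} {T : Set G} {t : G}
    (ht : t ∈ T) {s : G} (hs : s ∈ lOrbit R Φ) :
    t * s * t⁻¹ ∈ lOrbit R (Φ ∪ conjEnd '' T) := by
  simp only [lOrbit, mem_iUnion] at hs ⊢
  obtain ⟨σ, hσ, r, hr, rfl⟩ := hs
  refine ⟨conjEnd t * σ, Submonoid.mul_mem _ (Submonoid.subset_closure (Or.inr ⟨t, ht, rfl⟩))
    (Submonoid.closure_mono subset_union_left hσ), r, hr, rfl⟩

end EndStabilizer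

section FiniteIndex

variable {G : Type*} [Group G]

theorem finite_monoidHom_of_fg [Group.FG G] (M : Type*) [Group M] [Finite M] :
    Finite (G →* M) := by
  obtain ⟨S, hS⟩ := Group.fg_def.mp ‹_›
  exact Finite.of_injective (fun f : G →* M => fun s : S => f s)
    fun f g hfg => MonoidHom.eq_of_eqOn_dense hS fun s hs => congrFun hfg ⟨s, hs⟩

theorem exists_finiteIndex_le_forall_mem_endStabilizer [Group.FG G] (U : Subgroup G)
    [U.FiniteIndex] :
    ∃ W ≤ U, W.FiniteIndex ∧ ∀ σ : Monoid.End G, σ ∈ W.endStabilizer := by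
  have := finite_monoidHom_of_fg (G := G) (Equiv.Perm (G ⧸ U))
  -- Precomposing an action of `G` on `G ⧸ U` with an endomorphism gives another action.
  refine ⟨⨅ φ : G →* Equiv.Perm (G ⧸ U), φ.ker, ?_,
    finiteIndex_iInf fun _ => inferInstance, ?_⟩
  · refine (iInf_le _ (MulAction.toPermHom G (G ⧸ U))).trans ?_
    rw [← normalCore_eq_ker]
    exact U.normalCore_le
  · intro σ x hx
    simp only [mem_iInf, MonoidHom.mem_ker] at hx ⊢
    exact fun φ => hx (φ.comp σ)

theorem exists_normal_finiteIndex_between [Group.FG G] {L U : Subgroup G} [L.Normal]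
    [U.FiniteIndex] (hLU : L ≤ U) {Φ : Set (Monoid.End G)} (hΦ : Φ ⊆ L.endStabilizer) :
    ∃ V : Subgroup G,
      V.Normal ∧ V.FiniteIndex ∧ L ≤ V ∧ V ≤ U ∧ Φ ⊆ V.endStabilizer := by
  obtain ⟨W, hWU, hW, hWinv⟩ := exists_finiteIndex_le_forall_mem_endStabilizer U
  have : W.Normal := normal_of_forall_conjEnd_mem fun g => hWinv _
  exact ⟨W ⊔ L, sup_normal W L, finiteIndex_of_le le_sup_left, le_sup_right, sup_le hWU hLU,
    fun σ hσ => mem_endStabilizer_sup (hWinv σ) (hΦ hσ)⟩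

end FiniteIndex

theorem IsFreeGroup.exists_lift_of_range_le {P A G : Type*} [Group P] [IsFreeGroup P] [Group A]
    [Group G] (φ : P →* G) (χ : A →* G) (h : φ.range ≤ χ.range) :
    ∃ φ' : P →* A, ∀ x, χ (φ' x) = φ x := by
  choose s hs using fun a : IsFreeGroup.Generators P => h ⟨IsFreeGroup.of a, rfl⟩
  have h : χ.comp (IsFreeGroup.lift s) = φ := IsFreeGroup.ext_hom fun a => by simp [hs]
  exact ⟨IsFreeGroup.lift s, DFunLike.congr_fun h⟩

theorem FreeGroup.ker_le_normalClosure_of_hom {β P : Type*} [Group P] (ψ : FreeGroup β →* P)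
    (s : P →* FreeGroup β) :
    ψ.ker ≤ normalClosure (range fun b => of b * (s (ψ (of b)))⁻¹) := by
  set N := normalClosure (range fun b => of b * (s (ψ (of b)))⁻¹)
  have hmk : QuotientGroup.mk' N = (QuotientGroup.mk' N).comp (s.comp ψ) := by
    refine FreeGroup.ext_hom _ _ fun b => ?_
    simp only [MonoidHom.comp_apply, QuotientGroup.mk'_apply]
    exact QuotientGroup.eq_iff_div_mem.mpr (by
      rw [div_eq_mul_inv]; exact subset_normalClosure ⟨b, rfl⟩)
  intro w hw
  rw [← QuotientGroup.ker_mk' N, MonoidHom.mem_ker, hmk]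
  simp [MonoidHom.mem_ker.mp hw]

section Transversal

open scoped Pointwise

variable {G G' : Type*} [Group G] [Group G']

theorem normalClosure_le_map_of_conj_mem {ψ : G' →* G} {T S : Set G}
    (hT : (ψ.range : Set G) * T = univ) (N : Subgroup G') [N.Normal]
    (hS : ∀ t ∈ T, ∀ s ∈ S, t * s * t⁻¹ ∈ N.map ψ) :
    normalClosure S ≤ N.map ψ := by
  refine (closure_le _).mpr fun y hy => ?_
  obtain ⟨s, hs, hconj⟩ := Group.mem_conjugatesOfSet_iff.mp hy
  obtain ⟨g, rfl⟩ := isConj_iff.mp hconj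
  obtain ⟨_, ⟨w, rfl⟩, t, ht, rfl⟩ := hT.symm ▸ mem_univ g
  obtain ⟨n, hn, hψn⟩ := hS t ht s hs
  refine ⟨w * n * w⁻¹, ‹N.Normal›.conj_mem n hn w, ?_⟩
  simp only [map_mul, map_inv, hψn]
  group

theorem normalClosure_eq_comap_normalClosure {ψ : G' →* G} {T S : Set G}
    (hT : (ψ.range : Set G) * T = univ) {X : Set G'} (hker : ψ.ker ≤ normalClosure X)
    (hX : ψ '' X ⊆ normalClosure S) (hS : ∀ t ∈ T, ∀ s ∈ S, t * s * t⁻¹ ∈ ψ '' X) :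
    normalClosure X = (normalClosure S).comap ψ := by
  rw [← comap_map_eq_self hker]
  congr 1
  refine le_antisymm ((map_le_iff_le_comap).mpr (normalClosure_le_normal ?_)) ?_
  · exact fun x hx => hX ⟨x, hx, rfl⟩
  · exact normalClosure_le_map_of_conj_mem hT _ fun t ht s hs =>
      image_mono subset_normalClosure (hS t ht s hs)

end Transversal

theorem exists_lift_lOrbit {G : Type u} [Group G] {V U : Subgroup G} (hV : V.FG) (hU : U.FG)
    (hVU : V ≤ U) {R : Set G} (hR : R.Finite) (hRV : R ⊆ V) {P : Set (Monoid.End G)}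
    (hP : P.Finite) (hPV : P ⊆ V.endStabilizer) :
    ∃ (β : Type u) (_ : Finite β) (ψ : FreeGroup β →* G) (R' : Set (FreeGroup β))
      (Φ' : Set (Monoid.End (FreeGroup β))),
      R'.Finite ∧ Φ'.Finite ∧ ψ.range = U ∧ ψ '' lOrbit R' Φ' = lOrbit R P := by
  obtain ⟨SV, rfl⟩ := hV
  obtain ⟨SU, rfl⟩ := hU
  let χV : FreeGroup SV →* G := FreeGroup.lift (↑)
  let ψ : FreeGroup (SV ⊕ SU) →* G := FreeGroup.lift (Sum.elim (↑) (↑))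
  let j : FreeGroup SV →* FreeGroup (SV ⊕ SU) := FreeGroup.map Sum.inl
  let pp : FreeGroup (SV ⊕ SU) →* FreeGroup SV := FreeGroup.lift (Sum.elim FreeGroup.of 1)
  have hχV : χV.range = Subgroup.closure SV := by
    simp [χV, FreeGroup.range_lift_eq_closure]
  have hψj : ψ.comp j = χV := FreeGroup.ext_hom _ _ fun _ => by simp [ψ, j, χV]
  have hppj : ∀ w, pp (j w) = w := DFunLike.congr_fun
    (FreeGroup.ext_hom (pp.comp j) (MonoidHom.id _) fun _ => by simp [pp, j])
  have hlift : ∀ ρ ∈ P, ∃ ρ' : Monoid.End (FreeGroup SV), ∀ x, χV (ρ' x) = ρ (χV x) := by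
    intro ρ hρ
    refine IsFreeGroup.exists_lift_of_range_le ((ρ : G →* G).comp χV) χV ?_
    rintro _ ⟨x, rfl⟩
    rw [hχV]
    exact hPV hρ _ (hχV ▸ ⟨x, rfl⟩)
  choose! lift hlift using hlift
  obtain ⟨R₀, -, hR₀, hR₀R⟩ := hR.exists_subset_finite_image_eq (f := χV) (s := univ) (by
    rw [image_univ, ← MonoidHom.coe_range, hχV]; exact hRV)
  -- `extend φ` acts as `φ` on the first free factor and kills the second one.
  let extend : Monoid.End (FreeGroup SV) → Monoid.End (FreeGroup (SV ⊕ SU)) :=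
    fun φ => j.comp (φ.comp pp)
  refine ⟨SV ⊕ SU, inferInstance, ψ, j '' R₀, extend '' (lift '' P), hR₀.image _,
    (hP.image _).image _, ?_, ?_⟩
  · rw [FreeGroup.range_lift_eq_closure, Sum.elim_range, Subgroup.closure_union]
    simpa using hVU
  · calc ψ '' lOrbit (j '' R₀) (extend '' (lift '' P))
        = ψ '' (j '' lOrbit R₀ (lift '' P)) := by
          rw [← image_id (lift '' P), image_lOrbit j _ id extend, image_id]
          intro φ _ x
          change j (φ x) = j (φ (pp (j x)))
          rw [hppj]
      _ = χV '' lOrbit R₀ (lift '' P) := by rw [image_image, ← hψj]; rfl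
      _ = lOrbit R P := by
          rw [image_lOrbit χV P lift id (fun ρ hρ x => hlift ρ hρ x), image_id, hR₀R]

theorem exists_lPresentation_comap {α : Type u} [Finite α] {Q R : Set (FreeGroup α)}
    {Φ : Set (Monoid.End (FreeGroup α))} (hQ : Q.Finite) (hR : R.Finite) (hΦ : Φ.Finite)
    {U : Subgroup (FreeGroup α)} [U.FiniteIndex] (hKU : lNormalClosure Q R Φ ≤ U) :
    ∃ (β : Type u) (_ : Finite β) (ψ : FreeGroup β →* FreeGroup α)
      (Q' R' : Set (FreeGroup β)) (Φ' : Set (Monoid.End (FreeGroup β))),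
      Q'.Finite ∧ R'.Finite ∧ Φ'.Finite ∧ ψ.range = U ∧
        lNormalClosure Q' R' Φ' = (lNormalClosure Q R Φ).comap ψ := by
  have hKR : normalClosure (lOrbit R Φ) ≤ lNormalClosure Q R Φ :=
    normalClosure_mono subset_union_right
  obtain ⟨V, hVn, _, hKRV, hVU, hΦV⟩ := exists_normal_finiteIndex_between (hKR.trans hKU)
    (Submonoid.subset_closure.trans (closure_le_endStabilizer_normalClosure_lOrbit R Φ))
  obtain ⟨T, hT, -⟩ := exists_isComplement_right U 1
  have hRV : R ⊆ V := fun r hr =>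
    hKRV (subset_normalClosure (mem_iUnion₂.mpr ⟨1, Submonoid.one_mem _, r, hr, rfl⟩))
  obtain ⟨β, _, ψ, R', Φ', hR', hΦ', hψ, horbit⟩ := exists_lift_lOrbit
    ((Group.fg_iff_subgroup_fg V).mp inferInstance)
    ((Group.fg_iff_subgroup_fg U).mp inferInstance) hVU hR hRV (hΦ.union (hT.finite_right.image _))
    (union_subset hΦV (by rintro _ ⟨t, -, rfl⟩; exact hVn.conjEnd_mem_endStabilizer t))
  -- `ψ.range` is free by Nielsen–Schreier.
  obtain ⟨sec, hsec⟩ := IsFreeGroup.exists_lift_of_range_le ψ.range.subtype ψ (by simp)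
  have hconjQ : image2 (fun t q => t * q * t⁻¹) T Q ⊆ lNormalClosure Q R Φ := by
    rintro _ ⟨t, -, q, hq, rfl⟩
    exact normalClosure_normal.conj_mem q (subset_normalClosure (Or.inl hq)) t
  obtain ⟨Q₀, -, hQ₀, hQ₀Q⟩ := (hT.finite_right.image2 _ hQ).exists_subset_finite_image_eq
    (f := ψ) (s := univ) (by rw [image_univ, ← MonoidHom.coe_range, hψ]; exact hconjQ.trans hKU)
  let D := range fun b => FreeGroup.of b * (sec (ψ.rangeRestrict (FreeGroup.of b)))⁻¹
  refine ⟨β, inferInstance, ψ, D ∪ Q₀, R', Φ', (finite_range _).union hQ₀, hR', hΦ',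
    hψ, normalClosure_eq_comap_normalClosure (T := T) (by rw [hψ]; exact hT.mul_eq) ?_ ?_ ?_⟩
  · rw [← MonoidHom.ker_rangeRestrict]
    exact (FreeGroup.ker_le_normalClosure_of_hom _ sec).trans
      (normalClosure_mono (subset_union_left.trans subset_union_left))
  · rw [image_union, image_union, horbit, hQ₀Q]
    refine union_subset (union_subset ?_ hconjQ) ((lOrbit_union_conjEnd_subset R Φ T).trans hKR)
    rintro _ ⟨_, ⟨b, rfl⟩, rfl⟩
    simp [hsec]
  · rintro t ht s (hs | hs)
    · exact image_mono subset_union_left (image_mono subset_union_right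
        (hQ₀Q ▸ mem_image2_of_mem ht hs))
    · exact image_mono subset_union_right (horbit ▸ conj_mem_lOrbit_union_conjEnd ht hs)

theorem IsFinitelyLPresented.exists_surjective {G : Type u} [Group G]
    (hG : IsFinitelyLPresented G) :
    ∃ (n : ℕ) (Q R : Set (FreeGroup (Fin n))) (Φ : Set (Monoid.End (FreeGroup (Fin n)))),
      Q.Finite ∧ R.Finite ∧ Φ.Finite ∧ ∃ χ : FreeGroup (Fin n) →* G,
        Function.Surjective χ ∧ χ.ker = lNormalClosure Q R Φ := by
  obtain ⟨n, Q, R, Φ, ⟨e⟩⟩ := hG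
  let χ := e.toMonoidHom.comp (QuotientGroup.mk' _)
  have hχ : Function.Surjective χ := e.surjective.comp (QuotientGroup.mk'_surjective _)
  refine ⟨n, Q, R, Φ, Q.finite_toSet, R.finite_toSet, Φ.finite_toSet, χ, hχ, ?_⟩
  rw [MonoidHom.ker_comp_of_injective _ _ e.injective, QuotientGroup.ker_mk']
  rfl

theorem IsFinitelyLPresented.of_surjective {G : Type u} [Group G] {α : Type*} [Finite α]
    {Q R : Set (FreeGroup α)} {Φ : Set (Monoid.End (FreeGroup α))} (hQ : Q.Finite)
    (hR : R.Finite) (hΦ : Φ.Finite) (χ : FreeGroup α →* G) (hχ : Function.Surjective χ)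
    (hker : χ.ker = lNormalClosure Q R Φ) : IsFinitelyLPresented G := by
  obtain ⟨n, ⟨e⟩⟩ := Finite.exists_equiv_fin α
  let E := FreeGroup.freeGroupCongr e
  let conjE : Monoid.End (FreeGroup α) → Monoid.End (FreeGroup (Fin n)) :=
    fun σ => E.toMonoidHom.comp (σ.comp E.symm.toMonoidHom)
  have hsemiconj : ∀ σ ∈ Φ, ∀ x, E (σ x) = conjE σ (E x) := fun σ _ x =>
    congrArg E (congrArg σ (E.symm_apply_apply x).symm)
  have hker' : (χ.comp E.symm.toMonoidHom).ker =
      lNormalClosure (E '' Q) (E '' R) (conjE '' Φ) := by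
    rw [← MonoidHom.comap_ker, comap_equiv_eq_map_symm', MulEquiv.symm_symm, hker,
      lNormalClosure, map_normalClosure _ E.toMonoidHom E.surjective, image_union, ← image_id Φ,
      image_lOrbit E.toMonoidHom Φ id conjE hsemiconj, image_id]
    rfl
  have hχE : Function.Surjective (χ.comp E.symm.toMonoidHom) := hχ.comp E.symm.surjective
  refine ⟨n, (hQ.image E).toFinset, (hR.image E).toFinset, (hΦ.image conjE).toFinset, ⟨?_⟩⟩
  refine (QuotientGroup.quotientMulEquivOfEq ?_).trans
    (QuotientGroup.quotientKerEquivOfSurjective _ hχE)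
  rw [hker']
  simp only [Set.Finite.coe_toFinset]
  rfl

/-- (Reidemeister–Schreier for `L`-presentations) Every finite-index subgroup of a
finitely `L`-presented group is itself finitely `L`-presented. -/
theorem stmt_16 (G : Type u) [Group G] (hG : IsFinitelyLPresented G)
    (H : Subgroup G) (hH : H.index ≠ 0) :
    IsFinitelyLPresented ↥H := by
  obtain ⟨n, Q, R, Φ, hQ, hR, hΦ, χ, hχ, hker⟩ := hG.exists_surjective
  have : (H.comap χ).FiniteIndex := ⟨by rwa [index_comap_of_surjective H hχ]⟩
  obtain ⟨β, _, ψ, Q', R', Φ', hQ', hR', hΦ', hψ, hcomap⟩ :=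
    exists_lPresentation_comap hQ hR hΦ (hker ▸ MonoidHom.ker_le_comap χ H)
  have hmem : ∀ w, χ (ψ w) ∈ H := fun w => hψ.le ⟨w, rfl⟩
  refine .of_surjective hQ' hR' hΦ' ((χ.comp ψ).codRestrict H hmem) ?_ ?_
  · rintro ⟨h, hh⟩
    obtain ⟨x, rfl⟩ := hχ h
    obtain ⟨w, rfl⟩ := hψ.ge hh
    exact ⟨w, rfl⟩
  · rw [MonoidHom.ker_codRestrict, ← MonoidHom.comap_ker, hker, hcomap]
end

section
/- Let F be the free group on a finite set X, let Q and R be finite subsets of F, let Φ be a finite set of endomorphisms of F, let Φ* be the monoid generated by Φ under composition, and let K be the normal closure in F of Q ∪ ⋃_{σ∈Φ*} R^σ. For ℓ ≥ 0 let K_ℓ be the normal closure in F of Q ∪ ⋃_{σ∈Φ_ℓ} R^σ, where Φ_ℓ is the set of endomorphisms expressible as a composition of at most ℓ elements of Φ. If U is a finitely generated subgroup of F such that the subgroup UK has finite index in F, then there exists m ≥ 0 with UK_m = UK; in particular, the image of U in the finitely presented group F/K_m has the same (finite) index as the image of U in the finitely L-presented group F/K. -/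
/-- Truncation of an `L`-presentation: if `U` is a finitely generated subgroup of the free
group `F` on a finite set `X` and `UK` has finite index in `F` (where `K` is the kernel of
the `L`-presentation), then `UK = UK_m` for some finite truncation `K_m`; in particular the
image of `U` in the finitely presented group `F/K_m` has the same (finite) index as the
image of `U` in `F/K`. -/
theorem stmt_18 (X : Type) [Finite X] (Q R : Finset (FreeGroup X))
    (Φ : Finset (Monoid.End (FreeGroup X)))
    (K : Subgroup (FreeGroup X))
    (hK : K = Subgroup.normalClosure ((Q : Set (FreeGroup X)) ∪
      ⋃ σ ∈ Submonoid.closure (Φ : Set (Monoid.End (FreeGroup X))),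
        ⇑σ '' (R : Set (FreeGroup X))))
    (Kl : ℕ → Subgroup (FreeGroup X))
    (hKl : ∀ ℓ : ℕ, Kl ℓ = Subgroup.normalClosure ((Q : Set (FreeGroup X)) ∪
      ⋃ σ ∈ {τ : Monoid.End (FreeGroup X) | ∃ l : List (Monoid.End (FreeGroup X)),
          l.length ≤ ℓ ∧ (∀ τ' ∈ l, τ' ∈ Φ) ∧ τ = l.prod},
        ⇑σ '' (R : Set (FreeGroup X))))
    (U : Subgroup (FreeGroup X)) (hU : U.FG) (hfin : (U ⊔ K).index ≠ 0) :
    ∃ m : ℕ, U ⊔ Kl m = U ⊔ K ∧ (U ⊔ Kl m).index = (U ⊔ K).index := by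
  -- Kl is monotone
  have hmono : Monotone Kl := by
    intro a b hab
    rw [hKl a, hKl b]
    apply Subgroup.normalClosure_mono
    apply Set.union_subset_union_right
    apply Set.iUnion₂_mono'
    intro σ hσ
    obtain ⟨l, hl, hlΦ, hprod⟩ := hσ
    exact ⟨σ, ⟨l, hl.trans hab, hlΦ, hprod⟩, le_rfl⟩
  -- each Kl ℓ is contained in K
  have hKlle : ∀ ℓ, Kl ℓ ≤ K := by
    intro ℓ
    rw [hKl ℓ, hK]
    apply Subgroup.normalClosure_mono
    apply Set.union_subset_union_right
    apply Set.iUnion₂_mono'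
    intro σ hσ
    obtain ⟨l, _, hlΦ, hprod⟩ := hσ
    refine ⟨σ, ?_, le_rfl⟩
    rw [hprod]
    exact Submonoid.list_prod_mem _ fun x hx => Submonoid.subset_closure (hlΦ x hx)
  have hdirKl : Directed (· ≤ ·) Kl := hmono.directed_le
  -- the supremum of the Kl is normal
  have hnorm : (⨆ ℓ, Kl ℓ).Normal := by
    constructor
    intro n hn g
    rw [Subgroup.mem_iSup_of_directed hdirKl] at hn ⊢
    obtain ⟨i, hi⟩ := hn
    refine ⟨i, ?_⟩
    rw [hKl i] at hi ⊢
    exact Subgroup.normalClosure_normal.conj_mem _ hi g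
  -- K is contained in the supremum of the Kl
  have hKle : K ≤ ⨆ ℓ, Kl ℓ := by
    rw [hK]
    refine Subgroup.normalClosure_le_normal ?_
    rintro x (hx | hx)
    · have : x ∈ Kl 0 := by
        rw [hKl 0]
        exact Subgroup.subset_normalClosure (Or.inl hx)
      exact le_iSup Kl 0 this
    · simp only [Set.mem_iUnion] at hx
      obtain ⟨σ, hσ, hxσ⟩ := hx
      obtain ⟨l, hlΦ, hprod⟩ := Submonoid.exists_list_of_mem_closure hσ
      have : x ∈ Kl l.length := by
        rw [hKl l.length]
        apply Subgroup.subset_normalClosure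
        right
        simp only [Set.mem_iUnion]
        exact ⟨σ, ⟨l, le_rfl, hlΦ, hprod.symm⟩, hxσ⟩
      exact le_iSup Kl l.length this
  -- U ⊔ K is finitely generated (finite index subgroup of f.g. group)
  haveI : Group.FG (FreeGroup X) :=
    Group.fg_iff.mpr ⟨Set.range FreeGroup.of, FreeGroup.closure_range_of X,
      Set.finite_range _⟩
  haveI : (U ⊔ K).FiniteIndex := ⟨hfin⟩
  have hfg : (U ⊔ K).FG := (Group.fg_iff_subgroup_fg (U ⊔ K)).mp (U ⊔ K).fg_of_index_ne_zero
  obtain ⟨S, hS⟩ := hfg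
  -- directedness of ℓ ↦ U ⊔ Kl ℓ
  have hdir : Directed (· ≤ ·) (fun ℓ => U ⊔ Kl ℓ) :=
    (monotone_const.sup hmono).directed_le
  have hle : U ⊔ K ≤ ⨆ ℓ, (U ⊔ Kl ℓ) := by
    refine sup_le (le_trans le_sup_left (le_iSup (fun ℓ => U ⊔ Kl ℓ) 0)) ?_
    exact hKle.trans (iSup_mono fun ℓ => le_sup_right)
  -- each generator lies in some U ⊔ Kl ℓ
  have hgen : ∀ s ∈ S, ∃ ℓ, s ∈ U ⊔ Kl ℓ := by
    intro s hs
    have : s ∈ U ⊔ K := hS ▸ Subgroup.subset_closure hs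
    exact (Subgroup.mem_iSup_of_directed hdir).mp (hle this)
  choose f hf using hgen
  refine ⟨S.attach.sup fun s => f s s.2, le_antisymm (sup_le le_sup_left
    ((hKlle _).trans le_sup_right)) ?_, ?_⟩
  · rw [← hS, Subgroup.closure_le]
    intro s hs
    have hfs : f s hs ≤ S.attach.sup fun s => f s s.2 :=
      Finset.le_sup (f := fun t : {x // x ∈ S} => f t.1 t.2) (Finset.mem_attach S ⟨s, hs⟩)
    exact sup_le_sup_left (hmono hfs) U (hf s hs)
  · exact congrArg Subgroup.index (by
      exact le_antisymm (sup_le le_sup_left ((hKlle _).trans le_sup_right)) (by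
        rw [← hS, Subgroup.closure_le]
        intro s hs
        have hfs : f s hs ≤ S.attach.sup fun s => f s s.2 :=
          Finset.le_sup (f := fun t : {x // x ∈ S} => f t.1 t.2) (Finset.mem_attach S ⟨s, hs⟩)
        exact sup_le_sup_left (hmono hfs) U (hf s hs)))
end
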